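/- Let F : ℝ^n → ℝ^m be continuously differentiable, B a symmetric positive definite n×n real matrix, x ∈ ℝ^n, and δ, μ, α ∈ ℝ^m with 0 < δ_i ≤ μ_i and δ_i ≤ α_i for all i. Suppose each F_i is μ_i-strongly convex relative to ‖·‖_B. Then sup_{y∈ℝ^n} min_{i∈{1,…,m}} (F_i(x) − F_i(y))/δ_i ≤ r² · sup_{y∈ℝ^n} min_{i∈{1,…,m}} [ ⟨∇F_i(x), x−y⟩/α_i − (1/2)‖x−y‖_B² ], where r = max_{i∈{1,…,m}} α_i/δ_i. -/

import Mathlib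

open scoped RealInnerProductSpace

/-!
Fix `y` and put `d = x - y`, `L = min_i (F_i(x) - F_i(y))/δ_i`. If `L ≤ 0` there is nothing to
prove, since the right-hand supremum is at least its value `0` at `y = x`. If `L > 0`, strong
convexity and `δ_i ≤ μ_i` give `L ≤ ⟪∇F_i(x), d⟫/δ_i - ‖d‖_B²/2` for every `i`; in particular
`⟪∇F_i(x), d⟫ > 0`, so `1/δ_i ≤ r/α_i` may be used on it. The point `x - d/r` then makes the
`i`-th term of the right-hand minimum, multiplied by `r²`, equal to `r⟪∇F_i(x), d⟫/α_i - ‖d‖_B²/2`,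
which is at least `L`. The right-hand supremum is finite because `B` is invertible.
-/

/-- Maximum of a function over the (nonempty) finite index type `Fin m`. -/
noncomputable def fmax {m : ℕ} [NeZero m] (f : Fin m → ℝ) : ℝ :=
  Finset.univ.sup' Finset.univ_nonempty f

/-- Minimum of a function over the (nonempty) finite index type `Fin m`. -/
noncomputable def fmin {m : ℕ} [NeZero m] (f : Fin m → ℝ) : ℝ :=
  Finset.univ.inf' Finset.univ_nonempty f

lemma fmin_le {m : ℕ} [NeZero m] (f : Fin m → ℝ) (i : Fin m) : fmin f ≤ f i :=
  Finset.inf'_le _ (Finset.mem_univ i)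

lemma le_fmin {m : ℕ} [NeZero m] {f : Fin m → ℝ} {a : ℝ} (h : ∀ i, a ≤ f i) : a ≤ fmin f :=
  Finset.le_inf' _ _ fun i _ => h i

lemma le_fmax {m : ℕ} [NeZero m] (f : Fin m → ℝ) (i : Fin m) : f i ≤ fmax f :=
  Finset.le_sup' _ (Finset.mem_univ i)

lemma le_mul_div_sub_half_of_le_div {L a G Q δ μ α r : ℝ} (hδ : 0 < δ) (hδμ : δ ≤ μ)
    (hα : 0 < α) (hr : α / δ ≤ r) (hQ : 0 ≤ Q) (hL : 0 < L) (hLa : L ≤ a / δ)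
    (ha : a ≤ G - μ / 2 * Q) : L ≤ r * G / α - Q / 2 := by
  have hLG : L * δ + δ * Q / 2 ≤ G := by
    have := (le_div_iff₀ hδ).mp hLa
    nlinarith [mul_le_mul_of_nonneg_right hδμ hQ]
  have hG : 0 < G := by nlinarith [mul_pos hL hδ]
  have hαr : α ≤ r * δ := (div_le_iff₀ hδ).mp hr
  rw [le_sub_iff_add_le, le_div_iff₀ hα]
  nlinarith [mul_le_mul_of_nonneg_left hαr hG.le]

section Quadratic

variable {E : Type*} [NormedAddCommGroup E] [InnerProductSpace ℝ E] {B : E →ₗ[ℝ] E}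

lemma inner_map_self_nonneg_of_pos (hB : ∀ u, u ≠ 0 → 0 < ⟪u, B u⟫) (u : E) :
    0 ≤ ⟪u, B u⟫ := by
  rcases eq_or_ne u 0 with rfl | hu
  · simp
  · exact (hB u hu).le

lemma two_mul_inner_map_le (hsym : B.IsSymmetric) (hnn : ∀ u, 0 ≤ ⟪u, B u⟫) (u v : E) :
    2 * ⟪u, B v⟫ ≤ ⟪u, B u⟫ + ⟪v, B v⟫ := by
  have hexp : ⟪u - v, B (u - v)⟫ = ⟪u, B u⟫ - 2 * ⟪u, B v⟫ + ⟪v, B v⟫ := by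
    rw [map_sub, inner_sub_left, inner_sub_right, inner_sub_right, ← hsym v u,
      real_inner_comm u (B v)]
    ring
  linarith [hnn (u - v)]

lemma surjective_of_inner_map_self_pos [FiniteDimensional ℝ E]
    (hB : ∀ u, u ≠ 0 → 0 < ⟪u, B u⟫) : Function.Surjective B := by
  refine LinearMap.injective_iff_surjective.mp fun a b hab => ?_
  by_contra hne
  simpa [map_sub, hab] using hB (a - b) (sub_ne_zero.mpr hne)

/-- With `g = B h`, the bound is `⟪h, B h⟫ / 2`. -/
lemma exists_inner_sub_half_inner_map_le [FiniteDimensional ℝ E] (hsym : B.IsSymmetric)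
    (hB : ∀ u, u ≠ 0 → 0 < ⟪u, B u⟫) (g : E) :
    ∃ C, ∀ d, ⟪g, d⟫ - ⟪d, B d⟫ / 2 ≤ C := by
  obtain ⟨h, rfl⟩ := surjective_of_inner_map_self_pos hB g
  refine ⟨⟪h, B h⟫ / 2, fun d => ?_⟩
  have := two_mul_inner_map_le hsym (inner_map_self_nonneg_of_pos hB) h d
  rw [hsym]
  linarith

lemma sq_mul_inner_inv_smul_sub {r : ℝ} (hr : r ≠ 0) (g d : E) (a : ℝ) :
    r ^ 2 * (⟪g, r⁻¹ • d⟫ / a - ⟪r⁻¹ • d, B (r⁻¹ • d)⟫ / 2) = r * ⟪g, d⟫ / a - ⟪d, B d⟫ / 2 := by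
  rw [map_smul, real_inner_smul_left, real_inner_smul_right, real_inner_smul_right]
  field_simp

end Quadratic

theorem stmt15_general {n m : ℕ} [NeZero m] (F : Fin m → EuclideanSpace ℝ (Fin n) → ℝ)
    (B : EuclideanSpace ℝ (Fin n) →ₗ[ℝ] EuclideanSpace ℝ (Fin n))
    (hsym : ∀ u v : EuclideanSpace ℝ (Fin n), ⟪B u, v⟫ = ⟪u, B v⟫)
    (hposdef : ∀ u : EuclideanSpace ℝ (Fin n), u ≠ 0 → 0 < ⟪u, B u⟫)
    (x : EuclideanSpace ℝ (Fin n)) (δ μ α : Fin m → ℝ)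
    (hδ : ∀ i, 0 < δ i) (hδμ : ∀ i, δ i ≤ μ i) (hδα : ∀ i, δ i ≤ α i)
    (hsc : ∀ i, ∀ y z : EuclideanSpace ℝ (Fin n),
      F i y + ⟪gradient (F i) y, z - y⟫ + μ i / 2 * ⟪z - y, B (z - y)⟫ ≤ F i z)
    (r : ℝ) (hr : r = fmax fun i => α i / δ i) :
    (⨆ y : EuclideanSpace ℝ (Fin n), fmin fun i => (F i x - F i y) / δ i) ≤
      r ^ 2 * ⨆ y : EuclideanSpace ℝ (Fin n),
        fmin fun i => ⟪gradient (F i) x, x - y⟫ / α i - ⟪x - y, B (x - y)⟫ / 2 := by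
  have hα i : 0 < α i := (hδ i).trans_le (hδα i)
  have hri i : α i / δ i ≤ r := hr ▸ le_fmax (fun j => α j / δ j) i
  have hr_pos : 0 < r := one_pos.trans_le (((one_le_div (hδ 0)).mpr (hδα 0)).trans (hri 0))
  set Φ := fun y => fmin fun i => ⟪gradient (F i) x, x - y⟫ / α i - ⟪x - y, B (x - y)⟫ / 2
  have hbdd : BddAbove (Set.range Φ) := by
    obtain ⟨C, hC⟩ := exists_inner_sub_half_inner_map_le hsym hposdef ((α 0)⁻¹ • gradient (F 0) x)
    refine ⟨C, Set.forall_mem_range.mpr fun y => (fmin_le _ 0).trans ?_⟩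
    simpa [real_inner_smul_left, div_eq_inv_mul] using hC (x - y)
  have hΦ_nonneg : 0 ≤ ⨆ y, Φ y := (le_fmin fun i => by simp).trans (le_ciSup hbdd x)
  refine ciSup_le fun y => ?_
  set L := fmin fun i => (F i x - F i y) / δ i
  rcases le_or_gt L 0 with hL | hL
  · exact hL.trans (mul_nonneg (sq_nonneg r) hΦ_nonneg)
  have hdescent i : F i x - F i y ≤
      ⟪gradient (F i) x, x - y⟫ - μ i / 2 * ⟪x - y, B (x - y)⟫ := by
    have := hsc i x y
    rw [← neg_sub x y, map_neg, inner_neg_neg, inner_neg_right] at this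
    linarith
  calc L ≤ r ^ 2 * Φ (x - r⁻¹ • (x - y)) := by
        refine (div_le_iff₀' (pow_pos hr_pos 2)).mp (le_fmin fun i => ?_)
        rw [div_le_iff₀' (pow_pos hr_pos 2), sub_sub_cancel, sq_mul_inner_inv_smul_sub hr_pos.ne']
        exact le_mul_div_sub_half_of_le_div (hδ i) (hδμ i) (hα i) (hri i)
          (inner_map_self_nonneg_of_pos hposdef _) hL (fmin_le _ i) (hdescent i)
    _ ≤ r ^ 2 * ⨆ y, Φ y := by gcongr; exact le_ciSup hbdd _

/-- Under relative strong convexity (`0 < δ_i ≤ μ_i`, `δ_i ≤ α_i`),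
`sup_y min_i (F_i(x) − F_i(y))/δ_i ≤ r² · sup_y min_i [⟨∇F_i(x), x−y⟩/α_i − ‖x−y‖_B²/2]`
where `r = max_i α_i/δ_i`. -/
theorem stmt15 {n m : ℕ} [NeZero m] (F : Fin m → EuclideanSpace ℝ (Fin n) → ℝ)
    (hF : ∀ i, ContDiff ℝ 1 (F i))
    (B : EuclideanSpace ℝ (Fin n) →ₗ[ℝ] EuclideanSpace ℝ (Fin n))
    (hsym : ∀ u v : EuclideanSpace ℝ (Fin n), ⟪B u, v⟫ = ⟪u, B v⟫)
    (hposdef : ∀ u : EuclideanSpace ℝ (Fin n), u ≠ 0 → 0 < ⟪u, B u⟫)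
    (x : EuclideanSpace ℝ (Fin n)) (δ μ α : Fin m → ℝ)
    (hδ : ∀ i, 0 < δ i) (hδμ : ∀ i, δ i ≤ μ i) (hδα : ∀ i, δ i ≤ α i)
    (hsc : ∀ i, ∀ y z : EuclideanSpace ℝ (Fin n),
      F i y + ⟪gradient (F i) y, z - y⟫ + μ i / 2 * ⟪z - y, B (z - y)⟫ ≤ F i z)
    (r : ℝ) (hr : r = fmax fun i => α i / δ i) :
    (⨆ y : EuclideanSpace ℝ (Fin n), fmin fun i => (F i x - F i y) / δ i) ≤
      r ^ 2 * ⨆ y : EuclideanSpace ℝ (Fin n),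
        fmin fun i => ⟪gradient (F i) x, x - y⟫ / α i - ⟪x - y, B (x - y)⟫ / 2 :=
  stmt15_general F B hsym hposdef x δ μ α hδ hδμ hδα hsc r hr
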